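/- Let R be a ring, Σ a finite family of endomorphisms of R, Δ a finite family of Σ-derivations of R, and I a two-sided ideal of R. If I_Σ is Δ-invariant (i.e., δᵢ(I_Σ) ⊆ I_Σ for all i), then I_{Σ,Δ} = I_Σ. -/

import Mathlib

/-- The composition `f₁^[α₁] ∘ ⋯ ∘ fₙ^[αₙ]` of iterates of a finite family of maps. -/
def compPow {R : Type*} (n : ℕ) (f : Fin n → R → R) (α : Fin n → ℕ) : R → R :=
  (List.ofFn fun i => (f i)^[α i]).foldr (· ∘ ·) id

/-- `δ` is a `σ`-derivation of the ring `R`. -/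
def IsSigmaDeriv {R : Type*} [Ring R] (σ : R →+* R) (δ : R → R) : Prop :=
  (∀ a b, δ (a + b) = δ a + δ b) ∧ ∀ a b, δ (a * b) = σ a * δ b + δ a * b

lemma foldr_mem {R : Type*} (S : Set R) (l : List (R → R))
    (h : ∀ g ∈ l, ∀ a ∈ S, g a ∈ S) : ∀ a ∈ S, l.foldr (· ∘ ·) id a ∈ S := by
  induction l with
  | nil => intro a ha; exact ha
  | cons g t ih =>
    intro a ha
    exact h g List.mem_cons_self _ (ih (fun g hg => h g (List.mem_cons_of_mem _ hg)) a ha)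

lemma compPow_mem {R : Type*} (n : ℕ) (f : Fin n → R → R) (α : Fin n → ℕ) (S : Set R)
    (h : ∀ i, ∀ a ∈ S, f i a ∈ S) : ∀ a ∈ S, compPow n f α a ∈ S := by
  apply foldr_mem
  intro g hg
  obtain ⟨i, rfl⟩ := List.mem_ofFn.mp hg
  intro a ha
  show (f i)^[α i] a ∈ S
  generalize α i = k
  induction k with
  | zero => exact ha
  | succ k ih =>
    rw [Function.iterate_succ_apply']
    exact h i _ ih

lemma compPow_zero {R : Type*} (n : ℕ) (f : Fin n → R → R) (a : R) :
    compPow n f (fun _ => 0) a = a := by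
  have key : ∀ m : ℕ, (List.replicate m (id : R → R)).foldr (· ∘ ·) id a = a := by
    intro m
    induction m with
    | zero => rfl
    | succ k ih => simpa [List.replicate_succ] using ih
  unfold compPow
  simp only [Function.iterate_zero, List.ofFn_const]
  exact key n

/-- if `I_Σ` is `Δ`-invariant then `I_{Σ,Δ} = I_Σ`. -/
theorem stmt1 {R : Type*} [Ring R] (n : ℕ) (σ : Fin n → R →+* R) (δ : Fin n → R → R)
    (hδ : ∀ i, IsSigmaDeriv (σ i) (δ i)) (I : TwoSidedIdeal R)
    (hinv : ∀ i : Fin n, ∀ a ∈ {a : R | a ∈ I ∧ ∀ α : Fin n → ℕ,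
        compPow n (fun i => ⇑(σ i)) α a ∈ I},
      δ i a ∈ {a : R | a ∈ I ∧ ∀ α : Fin n → ℕ, compPow n (fun i => ⇑(σ i)) α a ∈ I}) :
    {a : R | a ∈ I ∧ ∀ α β : Fin n → ℕ, compPow n (fun i => ⇑(σ i)) α (compPow n δ β a) ∈ I}
      = {a : R | a ∈ I ∧ ∀ α : Fin n → ℕ, compPow n (fun i => ⇑(σ i)) α a ∈ I} := by
  ext a
  constructor
  · rintro ⟨ha, h⟩
    refine ⟨ha, fun α => ?_⟩
    have := h α (fun _ => 0)
    rwa [compPow_zero] at this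
  · rintro ⟨ha, h⟩
    refine ⟨ha, fun α β => ?_⟩
    exact (compPow_mem n δ β _ hinv a ⟨ha, h⟩).2 α
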